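/- arXiv:1805.07541 — 2 statements merged into one kernel-verified Lean document; each statement's English description precedes it below -/
import Mathlib

section
/- Let ρ > 0 and κ ∈ ℝ^m. Then the minimum, over μ ∈ ℝ^m with μᵢ ≥ 0 for all i and Σᵢ μᵢ = 1, of ρ·‖μ‖₂² + μᵀκ equals the supremum over τ ∈ ℝ of −τ − (1/(4ρ))·Σᵢ max(0, −(κᵢ + τ))²; equivalently, it equals −(1/(4ρ)) times the infimum over τ ∈ ℝ of 4ρτ + Σ_{i : τ ≤ −κᵢ} (τ + κᵢ)². -/
/-!
With `∑ μᵢ = 1` and `tᵢ = κᵢ + τ`, the primal value minus the dual value splits as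
`∑ᵢ (ρ μᵢ² + μᵢ tᵢ + max(0, -tᵢ)² / (4ρ))`, and each summand is nonnegative (for `tᵢ < 0` it is
`(2ρμᵢ + tᵢ)² / (4ρ)`). This is weak duality. Every summand vanishes at `μᵢ = max(0, -tᵢ) / (2ρ)`,
which lies on the simplex exactly when `∑ᵢ max(0, -(κᵢ + τ)) = 2ρ`; such a `τ` exists by the
intermediate value theorem, since the left side is continuous in `τ`, vanishes for `τ` large and
exceeds any bound for `τ` small. The last form of the dual is `-4ρ` times the dual function.
-/

open Finset

variable {ι : Type*} [Fintype ι]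

noncomputable def simplexObjective (ρ : ℝ) (κ μ : ι → ℝ) : ℝ :=
  ρ * (∑ i, μ i ^ 2) + ∑ i, μ i * κ i

noncomputable def simplexDual (ρ : ℝ) (κ : ι → ℝ) (τ : ℝ) : ℝ :=
  -τ - (1 / (4 * ρ)) * ∑ i, max 0 (-(κ i + τ)) ^ 2

noncomputable def dualityGapTerm (ρ x t : ℝ) : ℝ :=
  ρ * x ^ 2 + x * t + (1 / (4 * ρ)) * max 0 (-t) ^ 2

lemma dualityGapTerm_nonneg {ρ : ℝ} (hρ : 0 < ρ) {x : ℝ} (hx : 0 ≤ x) (t : ℝ) :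
    0 ≤ dualityGapTerm ρ x t := by
  unfold dualityGapTerm
  rcases le_total 0 t with ht | ht
  · rw [max_eq_left (by linarith)]
    positivity
  · rw [max_eq_right (by linarith)]
    have hsq : ρ * x ^ 2 + x * t + (1 / (4 * ρ)) * (-t) ^ 2 = (2 * ρ * x + t) ^ 2 / (4 * ρ) := by
      field_simp
      ring
    rw [hsq]
    positivity

lemma dualityGapTerm_max_zero_neg_div_eq_zero {ρ : ℝ} (hρ : 0 < ρ) (t : ℝ) :
    dualityGapTerm ρ (max 0 (-t) / (2 * ρ)) t = 0 := by
  unfold dualityGapTerm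
  rcases le_total 0 t with ht | ht
  · simp [max_eq_left (neg_nonpos.mpr ht)]
  · rw [max_eq_right (by linarith)]
    field_simp
    ring

lemma simplexObjective_sub_simplexDual (ρ : ℝ) (κ : ι → ℝ) (τ : ℝ) {μ : ι → ℝ} (hμ : ∑ i, μ i = 1) :
    simplexObjective ρ κ μ - simplexDual ρ κ τ = ∑ i, dualityGapTerm ρ (μ i) (κ i + τ) := by
  have hτ : ∑ i, μ i * (κ i + τ) = ∑ i, μ i * κ i + τ := by
    simp only [mul_add, sum_add_distrib, ← sum_mul, hμ, one_mul]
  simp only [simplexObjective, simplexDual, dualityGapTerm, sum_add_distrib, ← mul_sum, hτ]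
  ring

theorem simplexDual_le_simplexObjective {ρ : ℝ} (hρ : 0 < ρ) (κ : ι → ℝ) (τ : ℝ) {μ : ι → ℝ}
    (hμ₀ : ∀ i, 0 ≤ μ i) (hμ₁ : ∑ i, μ i = 1) :
    simplexDual ρ κ τ ≤ simplexObjective ρ κ μ := by
  have hgap := simplexObjective_sub_simplexDual ρ κ τ hμ₁
  have := sum_nonneg fun i (_ : i ∈ univ) => dualityGapTerm_nonneg hρ (hμ₀ i) (κ i + τ)
  linarith

lemma exists_sum_max_zero_neg_add_eq [Nonempty ι] (κ : ι → ℝ) {c : ℝ} (hc : 0 ≤ c) :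
    ∃ τ, ∑ i, max 0 (-(κ i + τ)) = c := by
  set S := ∑ j, |κ j|
  have hκ : ∀ i, |κ i| ≤ S := fun i => single_le_sum (fun j _ => abs_nonneg (κ j)) (mem_univ i)
  have hcont : Continuous fun τ : ℝ => ∑ i, max 0 (-(κ i + τ)) := by fun_prop
  have hlarge : ∑ i, max 0 (-(κ i + S)) = 0 :=
    sum_eq_zero fun i _ => max_eq_left (by linarith [neg_abs_le (κ i), hκ i])
  obtain ⟨i₀⟩ := ‹Nonempty ι›
  have hsmall : c ≤ ∑ i, max 0 (-(κ i + (-S - c))) :=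
    calc c ≤ max 0 (-(κ i₀ + (-S - c))) :=
          le_max_of_le_right (by linarith [le_abs_self (κ i₀), hκ i₀])
      _ ≤ _ := single_le_sum (f := fun i => max 0 (-(κ i + (-S - c))))
          (fun i _ => le_max_left _ _) (mem_univ i₀)
  have hc' : c ∈ Set.Icc (∑ i, max 0 (-(κ i + S))) (∑ i, max 0 (-(κ i + (-S - c)))) := by
    rw [hlarge]
    exact ⟨hc, hsmall⟩
  exact intermediate_value_univ S (-S - c) hcont hc'

theorem exists_simplexObjective_eq_simplexDual [Nonempty ι] {ρ : ℝ} (hρ : 0 < ρ) (κ : ι → ℝ) :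
    ∃ μ : ι → ℝ, ∃ τ : ℝ, (∀ i, 0 ≤ μ i) ∧ ∑ i, μ i = 1 ∧
      simplexObjective ρ κ μ = simplexDual ρ κ τ := by
  obtain ⟨τ, hτ⟩ := exists_sum_max_zero_neg_add_eq κ (by positivity : 0 ≤ 2 * ρ)
  set μ : ι → ℝ := fun i => max 0 (-(κ i + τ)) / (2 * ρ)
  have hμ₁ : ∑ i, μ i = 1 := by
    rw [← sum_div, hτ, div_self (by positivity)]
  refine ⟨μ, τ, fun i => by positivity, hμ₁, ?_⟩
  have hgap := simplexObjective_sub_simplexDual ρ κ τ hμ₁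
  rw [sum_eq_zero fun i _ => dualityGapTerm_max_zero_neg_div_eq_zero hρ (κ i + τ)] at hgap
  linarith

theorem exists_isLeast_simplexObjective_isGreatest_simplexDual [Nonempty ι] {ρ : ℝ} (hρ : 0 < ρ)
    (κ : ι → ℝ) : ∃ V : ℝ,
      IsLeast {v | ∃ μ : ι → ℝ, (∀ i, 0 ≤ μ i) ∧ ∑ i, μ i = 1 ∧ v = simplexObjective ρ κ μ} V ∧
      IsGreatest {v | ∃ τ : ℝ, v = simplexDual ρ κ τ} V := by
  obtain ⟨μ, τ, hμ₀, hμ₁, hμτ⟩ := exists_simplexObjective_eq_simplexDual hρ κ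
  refine ⟨simplexDual ρ κ τ, ⟨⟨μ, hμ₀, hμ₁, hμτ.symm⟩, ?_⟩, ⟨⟨τ, rfl⟩, ?_⟩⟩
  · rintro _ ⟨ν, hν₀, hν₁, rfl⟩
    exact simplexDual_le_simplexObjective hρ κ τ hν₀ hν₁
  · rintro _ ⟨σ, rfl⟩
    exact hμτ ▸ simplexDual_le_simplexObjective hρ κ σ hμ₀ hμ₁

lemma four_mul_add_sum_filter_sq_eq {ρ : ℝ} (hρ : ρ ≠ 0) (κ : ι → ℝ) (τ : ℝ) :
    4 * ρ * τ + ∑ i ∈ univ.filter (fun i => τ ≤ -κ i), (τ + κ i) ^ 2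
      = -(4 * ρ) * simplexDual ρ κ τ := by
  have hsum : ∑ i ∈ univ.filter (fun i => τ ≤ -κ i), (τ + κ i) ^ 2
      = ∑ i, max 0 (-(κ i + τ)) ^ 2 := by
    rw [sum_filter]
    refine sum_congr rfl fun i _ => ?_
    split_ifs with h
    · rw [max_eq_right (by linarith)]
      ring
    · rw [max_eq_left (by linarith)]
      ring
  rw [hsum, simplexDual]
  field_simp
  ring

theorem isLeast_four_mul_add_sum_filter_sq {ρ : ℝ} (hρ : 0 < ρ) {κ : ι → ℝ} {V : ℝ}
    (hV : IsGreatest {v | ∃ τ : ℝ, v = simplexDual ρ κ τ} V) :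
    IsLeast {v | ∃ τ : ℝ, v = 4 * ρ * τ + ∑ i ∈ univ.filter (fun i => τ ≤ -κ i), (τ + κ i) ^ 2}
      (-(4 * ρ) * V) := by
  simp only [four_mul_add_sum_filter_sq_eq hρ.ne']
  obtain ⟨⟨τ, rfl⟩, hub⟩ := hV
  refine ⟨⟨τ, rfl⟩, ?_⟩
  rintro _ ⟨σ, rfl⟩
  exact mul_le_mul_of_nonpos_left (hub ⟨σ, rfl⟩) (by linarith)

/-- strong duality for the simplex quadratic program: for ρ > 0,
min_{μ ≥ 0, Σμ = 1} ρ‖μ‖₂² + μᵀκ = sup_τ (−τ − (1/(4ρ)) Σᵢ max(0, −(κᵢ+τ))²)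
= −(1/(4ρ)) · inf_τ (4ρτ + Σ_{i : τ ≤ −κᵢ} (τ+κᵢ)²). -/
theorem stmt12 {m : ℕ} (hm : 0 < m) (ρ : ℝ) (hρ : 0 < ρ) (κ : Fin m → ℝ) :
    sInf {v : ℝ | ∃ μ : Fin m → ℝ, (∀ i, 0 ≤ μ i) ∧ (∑ i, μ i) = 1 ∧
        v = ρ * (∑ i, μ i ^ 2) + ∑ i, μ i * κ i}
      = sSup {v : ℝ | ∃ τ : ℝ,
          v = -τ - (1 / (4 * ρ)) * ∑ i, max 0 (-(κ i + τ)) ^ 2} ∧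
    sInf {v : ℝ | ∃ μ : Fin m → ℝ, (∀ i, 0 ≤ μ i) ∧ (∑ i, μ i) = 1 ∧
        v = ρ * (∑ i, μ i ^ 2) + ∑ i, μ i * κ i}
      = -(1 / (4 * ρ)) * sInf {v : ℝ | ∃ τ : ℝ,
          v = 4 * ρ * τ + ∑ i ∈ Finset.univ.filter (fun i => τ ≤ -κ i), (τ + κ i) ^ 2} := by
  have : Nonempty (Fin m) := Fin.pos_iff_nonempty.mp hm
  obtain ⟨V, hP, hD⟩ := exists_isLeast_simplexObjective_isGreatest_simplexDual hρ κ
  have hF := isLeast_four_mul_add_sum_filter_sq hρ hD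
  have hV : V = -(1 / (4 * ρ)) * (-(4 * ρ) * V) := by
    field_simp
  exact ⟨hP.csInf_eq.trans hD.csSup_eq.symm,
    hP.csInf_eq.trans (hV.trans (congrArg _ hF.csInf_eq.symm))⟩
end

section
/- Let Φ be an m×m real symmetric matrix and ρ > 0. Then there exists a real number φ such that the (unique) minimizer of ρ·tr(Ω²) + tr(ΦΩ) over symmetric positive semidefinite m×m matrices Ω with tr(Ω) = 1 equals the positive part of (φ·I − Φ)/(2ρ), i.e., the matrix obtained from the spectral decomposition of (φ·I − Φ)/(2ρ) by replacing every negative eigenvalue with 0. In particular, this minimizer commutes with Φ. -/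
open Matrix

/-!
Choose `φ` so that `P := ((φ I - Φ) / (2ρ))⁺` has unit trace; this is an intermediate value
argument on `φ ↦ ∑ᵢ max (φ - λᵢ) 0` over the eigenvalues `λᵢ` of `Φ`. With
`N := 2ρ ((φ I - Φ) / (2ρ))⁻ ≥ 0` one has `2ρ P + Φ = φ I + N` and `N P = 0`, the KKT conditions
of problem (7). For every feasible `Ω` they give, with `f` the objective,
`f Ω - f P = ρ tr((Ω - P)²) + tr(N Ω) ≥ 0`, with equality only at `Ω = P`.
-/

open scoped MatrixOrder ComplexOrder

lemma CFC.posPart_eq_cfc_max {A : Type*} [Ring A] [Algebra ℝ A] [StarRing A] [TopologicalSpace A]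
    [ContinuousFunctionalCalculus ℝ A IsSelfAdjoint] [T2Space A] (a : A) :
    a⁺ = cfc (fun t : ℝ => max t 0) a := by
  rw [CFC.posPart_def, cfcₙ_eq_cfc]
  rfl

lemma exists_sum_max_sub_eq {ι : Type*} [Fintype ι] [Nonempty ι] (E : ι → ℝ) {y : ℝ}
    (hy : 0 ≤ y) : ∃ φ, ∑ i, max (φ - E i) 0 = y := by
  obtain ⟨i₀, hi₀⟩ := Finite.exists_min E
  obtain ⟨i₁, hi₁⟩ := Finite.exists_max E
  have hcont : Continuous fun φ => ∑ i, max (φ - E i) 0 := by fun_prop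
  have hlow : ∑ i, max (E i₀ - E i) 0 = 0 :=
    Finset.sum_eq_zero fun i _ => max_eq_right (sub_nonpos.mpr (hi₀ i))
  have hhigh : y ≤ ∑ i, max (E i₁ + y - E i) 0 :=
    calc y = max (E i₁ + y - E i₁) 0 := by rw [add_sub_cancel_left, max_eq_left hy]
      _ ≤ _ := Finset.single_le_sum (f := fun i => max (E i₁ + y - E i) 0)
          (fun i _ => le_max_right _ _) (Finset.mem_univ i₁)
  obtain ⟨φ, -, hφ⟩ := intermediate_value_Icc (by linarith [hi₁ i₀]) hcont.continuousOn
    ⟨hlow ▸ hy, hhigh⟩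
  exact ⟨φ, hφ⟩

namespace Matrix

variable {n 𝕜 : Type*} [Fintype n] [RCLike 𝕜]

lemma PosSemidef.trace_mul_nonneg [DecidableEq n] {A B : Matrix n n 𝕜} (hA : A.PosSemidef) (hB : B.PosSemidef) :
    0 ≤ (A * B).trace := by
  obtain ⟨C, rfl⟩ := CStarAlgebra.nonneg_iff_eq_star_mul_self.mp hB.nonneg
  rw [star_eq_conjTranspose, ← Matrix.mul_assoc, trace_mul_comm]
  simpa only [Matrix.mul_assoc] using (hA.mul_mul_conjTranspose_same C).trace_nonneg

lemma IsHermitian.trace_mul_self_nonneg {S : Matrix n n 𝕜} (hS : S.IsHermitian) :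
    0 ≤ (S * S).trace := by
  simpa only [hS.eq] using (posSemidef_conjTranspose_mul_self S).trace_nonneg

lemma IsHermitian.trace_mul_self_eq_zero_iff {S : Matrix n n 𝕜} (hS : S.IsHermitian) :
    (S * S).trace = 0 ↔ S = 0 := by
  simpa only [hS.eq] using trace_conjTranspose_mul_self_eq_zero_iff (A := S)

lemma IsHermitian.trace_cfc [DecidableEq n] {A : Matrix n n 𝕜} (hA : A.IsHermitian) (f : ℝ → ℝ) :
    (cfc f A).trace = ∑ i, (f (hA.eigenvalues i) : 𝕜) := by
  rw [hA.cfc_eq, IsHermitian.cfc, Unitary.conjStarAlgAut_apply, trace_mul_cycle,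
    Unitary.coe_star_mul_self, Matrix.one_mul, trace_diagonal]
  rfl

end Matrix

section TraceObjective

variable {n : Type*} [Fintype n]

/-- The objective of problem (7). -/
def traceObjective (ρ : ℝ) (Φ Ω : Matrix n n ℝ) : ℝ := ρ * (Ω * Ω).trace + (Φ * Ω).trace

variable [DecidableEq n] {ρ φ : ℝ} {Φ P N Ω : Matrix n n ℝ}

lemma traceObjective_sub_eq_of_kkt (hΩ : Ω.trace = 1) (hP : P.trace = 1) (hNP : N * P = 0)
    (hkkt : (2 * ρ) • P + Φ = φ • 1 + N) :
    traceObjective ρ Φ Ω - traceObjective ρ Φ P =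
      ρ * ((Ω - P) * (Ω - P)).trace + (N * Ω).trace := by
  obtain rfl : Φ = φ • 1 + N - (2 * ρ) • P := by rw [← hkkt]; abel
  have hNP' : (N * P).trace = 0 := by rw [hNP, trace_zero]
  simp only [traceObjective, Matrix.sub_mul, Matrix.add_mul, Matrix.mul_sub, Matrix.smul_mul,
    Matrix.one_mul, trace_sub, trace_add, trace_smul, smul_eq_mul, hΩ, hP, hNP',
    trace_mul_comm P Ω]
  ring

lemma traceObjective_le_of_kkt (hρ : 0 ≤ ρ) (hP : P.IsHermitian) (hPtr : P.trace = 1)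
    (hN : N.PosSemidef) (hNP : N * P = 0) (hkkt : (2 * ρ) • P + Φ = φ • 1 + N)
    (hΩ : Ω.PosSemidef) (hΩtr : Ω.trace = 1) :
    traceObjective ρ Φ P ≤ traceObjective ρ Φ Ω := by
  have hdiff := traceObjective_sub_eq_of_kkt hΩtr hPtr hNP hkkt
  nlinarith [(hΩ.isHermitian.sub hP).trace_mul_self_nonneg, hN.trace_mul_nonneg hΩ]

lemma eq_of_traceObjective_eq_of_kkt (hρ : 0 < ρ) (hP : P.IsHermitian) (hPtr : P.trace = 1)
    (hN : N.PosSemidef) (hNP : N * P = 0) (hkkt : (2 * ρ) • P + Φ = φ • 1 + N)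
    (hΩ : Ω.PosSemidef) (hΩtr : Ω.trace = 1)
    (heq : traceObjective ρ Φ Ω = traceObjective ρ Φ P) : Ω = P := by
  have hdiff := traceObjective_sub_eq_of_kkt hΩtr hPtr hNP hkkt
  have hΩP := hΩ.isHermitian.sub hP
  have hzero : ((Ω - P) * (Ω - P)).trace = 0 := by
    nlinarith [hΩP.trace_mul_self_nonneg, hN.trace_mul_nonneg hΩ]
  exact sub_eq_zero.mp (hΩP.trace_mul_self_eq_zero_iff.mp hzero)

end TraceObjective

section PositivePart

variable {n : Type*} [Fintype n] [DecidableEq n] {Φ : Matrix n n ℝ}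

lemma smul_posPart_add_eq_add_smul_negPart (hΦ : Φ.IsHermitian) {c : ℝ} (hc : c ≠ 0) (φ : ℝ) :
    c • (c⁻¹ • (φ • 1 - Φ))⁺ + Φ = φ • 1 + c • (c⁻¹ • (φ • 1 - Φ))⁻ := by
  rw [eq_add_of_sub_eq (CFC.posPart_sub_negPart _), smul_add, smul_smul, mul_inv_cancel₀ hc,
    one_smul]
  abel

lemma Matrix.IsHermitian.trace_posPart_inv_smul_sub (hΦ : Φ.IsHermitian) {c : ℝ} (hc : 0 ≤ c)
    (φ : ℝ) : ((c⁻¹ • (φ • 1 - Φ))⁺).trace = c⁻¹ * ∑ i, max (φ - hΦ.eigenvalues i) 0 := by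
  have hlin : c⁻¹ • (φ • 1 - Φ) = cfc (fun t : ℝ => c⁻¹ * (φ - t)) Φ := by
    rw [cfc_const_mul _ _ _ (by fun_prop), cfc_sub _ _ _ (by fun_prop) (by fun_prop),
      cfc_const _ _, cfc_id' ℝ Φ, Algebra.algebraMap_eq_smul_one]
  rw [CFC.posPart_eq_cfc_max, hlin, ← cfc_comp' _ _ _ (by fun_prop) (by fun_prop),
    hΦ.trace_cfc, Finset.mul_sum]
  refine Finset.sum_congr rfl fun i _ => ?_
  simp only [RCLike.ofReal_real_eq_id, id_eq, mul_max_of_nonneg _ _ (inv_nonneg.mpr hc),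
    mul_zero]

lemma commute_cfc_smul_sub (f : ℝ → ℝ) (c φ : ℝ) : Commute (cfc f (c • (φ • 1 - Φ))) Φ :=
  (((Commute.one_left Φ).smul_left φ).sub_left (Commute.refl Φ)).smul_left c |>.cfc_real f

end PositivePart

/-- for symmetric Φ and ρ > 0, there exists φ ∈ ℝ such that the unique
minimizer of ρ·tr(Ω²) + tr(ΦΩ) over symmetric PSD Ω with tr(Ω) = 1 is the positive
part of (φ·I − Φ)/(2ρ) (the map t ↦ max(t,0) applied to the eigenvalues in a spectral
decomposition); in particular this minimizer commutes with Φ. -/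
theorem stmt17 {m : ℕ} (hm : 0 < m) (Φ : Matrix (Fin m) (Fin m) ℝ) (hΦ : Φ.IsHermitian)
    (ρ : ℝ) (hρ : 0 < ρ) :
    ∃ φ : ℝ, ∃ P : Matrix (Fin m) (Fin m) ℝ,
      P = cfc (fun t : ℝ => max t 0)
            ((2 * ρ)⁻¹ • (φ • (1 : Matrix (Fin m) (Fin m) ℝ) - Φ)) ∧
      P.PosSemidef ∧ P.trace = 1 ∧
      (∀ Ω : Matrix (Fin m) (Fin m) ℝ, Ω.PosSemidef → Ω.trace = 1 →
        ρ * (P * P).trace + (Φ * P).trace ≤ ρ * (Ω * Ω).trace + (Φ * Ω).trace) ∧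
      (∀ Ω : Matrix (Fin m) (Fin m) ℝ, Ω.PosSemidef → Ω.trace = 1 →
        ρ * (Ω * Ω).trace + (Φ * Ω).trace = ρ * (P * P).trace + (Φ * P).trace → Ω = P) ∧
      P * Φ = Φ * P := by
  have : Nonempty (Fin m) := ⟨⟨0, hm⟩⟩
  have h2ρ : 0 < 2 * ρ := by positivity
  obtain ⟨φ, hφ⟩ := exists_sum_max_sub_eq hΦ.eigenvalues h2ρ.le
  set A := (2 * ρ)⁻¹ • (φ • (1 : Matrix (Fin m) (Fin m) ℝ) - Φ)
  have hP : (A⁺).PosSemidef := (CFC.posPart_nonneg A).posSemidef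
  have hPtr : (A⁺).trace = 1 := by
    rw [hΦ.trace_posPart_inv_smul_sub h2ρ.le, hφ, inv_mul_cancel₀ h2ρ.ne']
  have hN : ((2 * ρ) • A⁻).PosSemidef := (CFC.negPart_nonneg A).posSemidef.smul h2ρ.le
  have hNP : (2 * ρ) • A⁻ * A⁺ = 0 := by rw [smul_mul_assoc, CFC.negPart_mul_posPart, smul_zero]
  have hkkt := smul_posPart_add_eq_add_smul_negPart hΦ h2ρ.ne' φ
  refine ⟨φ, A⁺, CFC.posPart_eq_cfc_max A, hP, hPtr,
    fun Ω hΩ hΩtr => traceObjective_le_of_kkt hρ.le hP.isHermitian hPtr hN hNP hkkt hΩ hΩtr,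
    fun Ω hΩ hΩtr heq =>
      eq_of_traceObjective_eq_of_kkt hρ hP.isHermitian hPtr hN hNP hkkt hΩ hΩtr heq, ?_⟩
  rw [CFC.posPart_eq_cfc_max]
  exact (commute_cfc_smul_sub _ _ _).eq
end
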